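/- Let b, s, r ≥ 1 be integers with gcd(b, s) = 1 and every prime dividing r dividing b. Then for any finite sequence of complex numbers (a_m), Σ*_{x mod b} |Σ_m a_m S(0, m; s) S(r x, m; b r)|² ≤ b r² s Σ*_{x mod bs} |Σ_{m ≡ 0 mod r} a_m e(x (m/r) / (b s))|². -/

import Mathlib

/-!
Since every prime factor of `r` divides `b`, the units modulo `br` are exactly the lifts of the
units modulo `b`. Summing `S(rx, m; br)` over the fibres of reduction modulo `b` therefore gives
`r S(x, m/r; b)` when `r ∣ m` and `0` otherwise. As `r` is invertible modulo `s`, also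
`S(0, m; s) = S(0, m/r; s)`, so the left-hand side becomes `r² Σ*_x |Σ*_v e(xv/b) H(v)|²` with
`H(v) = Σ_{r ∣ m} a_m S(0, m/r; s) e((m/r) v̄/b)`. Parseval over all residues `x` modulo `b`
bounds this by `r² b Σ_v |H(v)|²`. Opening the Ramanujan sum inside `H` and applying
Cauchy–Schwarz over the `φ(s) ≤ s` reduced residues `w` modulo `s` leaves a sum over pairs
`(v, w)`. The Chinese remainder theorem turns these pairs into the reduced residues `z` modulo
`bs`, with `e(kv/b) e(kw/s) = e(kz/bs)`.
-/

/-- `e(x) = exp(2πix)`. -/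
noncomputable def eBase (x : ℝ) : ℂ := Complex.exp (2 * Real.pi * Complex.I * x)

/-- The Kloosterman sum `S(a,b;c) = Σ*_{h mod c} e((a h + b h̄)/c)`. -/
noncomputable def kloosterman (a b : ℤ) (c : ℕ) : ℂ :=
  if h : c = 0 then 0 else
    haveI : NeZero c := ⟨h⟩
    ∑ u : (ZMod c)ˣ,
      eBase (((a * (((u : ZMod c)).val : ℤ) + b * ((((u⁻¹ : (ZMod c)ˣ) : ZMod c)).val : ℤ) : ℤ) : ℝ) / c)

open Finset ZMod

theorem Nat.Coprime.coprime_of_forall_prime_dvd {k b r : ℕ}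
    (hrad : ∀ p : ℕ, p.Prime → p ∣ r → p ∣ b) (h : k.Coprime b) : k.Coprime r :=
  Nat.coprime_of_dvd fun p hp hpk hpr => hp.not_dvd_one (h ▸ Nat.dvd_gcd hpk (hrad p hp hpr))

theorem Fintype.sum_units_eq_sum_ite_isUnit {M A : Type*} [Monoid M] [Fintype M] [Fintype Mˣ]
    [DecidablePred (IsUnit : M → Prop)] [AddCommMonoid A] (f : M → A) :
    ∑ u : Mˣ, f u = ∑ x : M, if IsUnit x then f x else 0 :=
  Fintype.sum_of_injective _ Units.val_injective _ _
    (fun _ hx => if_neg fun hu => hx ⟨hu.unit, rfl⟩) fun u => (if_pos u.isUnit).symm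

theorem AddMonoidHom.card_nsmul_sum_comp_of_surjective {G H A : Type*} [AddGroup G] [Fintype G]
    [AddGroup H] [Fintype H] [DecidableEq H] [AddCommMonoid A] (π : G →+ H)
    (hπ : Function.Surjective π) (f : H → A) :
    Fintype.card H • ∑ g, f (π g) = Fintype.card G • ∑ h, f h := by
  have hfiber : ∀ h, #{g | π g = h} = #{g | π g = 0} := fun h =>
    AddMonoidHom.card_fiber_eq_of_mem_range π (hπ h) (hπ 0)
  have hcard : Fintype.card G = Fintype.card H * #{g | π g = 0} := by
    rw [← card_univ, card_eq_sum_card_fiberwise (f := π) (t := univ) (by simp)]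
    simp [hfiber]
  rw [sum_comp, image_univ_of_surjective hπ, hcard, mul_comm, mul_nsmul, smul_sum]
  simp_rw [hfiber, smul_sum]

theorem norm_sum_sq_le_card_mul {ι : Type*} (A : Finset ι) (f : ι → ℂ) :
    ‖∑ i ∈ A, f i‖ ^ 2 ≤ #A * ∑ i ∈ A, ‖f i‖ ^ 2 :=
  (pow_le_pow_left₀ (norm_nonneg _) (norm_sum_le _ _) 2).trans (sq_sum_le_card_mul_sum_sq ..)

theorem eBase_intCast_div {N : ℕ} [NeZero N] (k : ℤ) :
    eBase (k / N) = stdAddChar (k : ZMod N) := by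
  rw [stdAddChar_coe, eBase]
  push_cast
  ring_nf

theorem eBase_natCast_div {N : ℕ} [NeZero N] (k : ℕ) :
    eBase (k / N) = stdAddChar (k : ZMod N) := by
  simpa using eBase_intCast_div (N := N) k

namespace ZMod

theorem castHom_inv {m n : ℕ} (h : m ∣ n) {u : ZMod n} (hu : IsUnit u) :
    castHom h (ZMod m) u⁻¹ = (castHom h (ZMod m) u)⁻¹ :=
  (ZMod.inv_eq_of_mul_eq_one _ _ _ (by rw [← map_mul, mul_inv_of_unit u hu, map_one])).symm

section Residues
variable {n : ℕ} [NeZero n]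

theorem sum_range_natCast {A : Type*} [AddCommMonoid A] (f : ZMod n → A) :
    ∑ x ∈ range n, f x = ∑ z : ZMod n, f z :=
  sum_nbij' (↑) val (fun _ _ => mem_univ _) (fun z _ => mem_range.2 z.val_lt)
    (fun _ hx => val_cast_of_lt (mem_range.1 hx)) (fun z _ => natCast_zmod_val z) fun _ _ => rfl

theorem sum_range_coprime {A : Type*} [AddCommMonoid A] (f : ZMod n → A) :
    ∑ x ∈ range n with x.Coprime n, f x = ∑ u : (ZMod n)ˣ, f u := by
  rw [Fintype.sum_units_eq_sum_ite_isUnit, ← sum_range_natCast, sum_filter]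
  simp_rw [isUnit_iff_coprime]

theorem sum_stdAddChar_mul (c : ZMod n) :
    ∑ x : ZMod n, stdAddChar (x * c) = if c = 0 then (n : ℂ) else 0 := by
  rw [AddChar.sum_mulShift c (isPrimitive_stdAddChar n), card, Nat.cast_ite, Nat.cast_zero]

theorem sum_norm_sq_sum_mul_stdAddChar {ι : Type*} [Fintype ι] {g : ι → ZMod n}
    (hg : Function.Injective g) (f : ι → ℂ) :
    ∑ x : ZMod n, ‖∑ i, f i * stdAddChar (x * g i)‖ ^ 2 = n * ∑ i, ‖f i‖ ^ 2 := by
  classical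
  apply Complex.ofReal_injective
  push_cast
  simp_rw [← Complex.mul_conj', map_sum, map_mul, ← AddChar.map_neg_eq_conj]
  calc ∑ x : ZMod n, (∑ i, f i * stdAddChar (x * g i)) *
        ∑ j, (starRingEnd ℂ) (f j) * stdAddChar (-(x * g j))
      = ∑ i, ∑ j, f i * (starRingEnd ℂ) (f j) * ∑ x : ZMod n, stdAddChar (x * (g i - g j)) := by
        simp_rw [sum_mul_sum, mul_sum]
        rw [sum_comm]
        refine sum_congr rfl fun i _ => ?_
        rw [sum_comm]
        refine sum_congr rfl fun j _ => sum_congr rfl fun x _ => ?_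
        rw [mul_sub, sub_eq_add_neg, AddChar.map_add_eq_mul]
        ring
    _ = n * ∑ i, f i * (starRingEnd ℂ) (f i) := by
        simp_rw [sum_stdAddChar_mul, sub_eq_zero, hg.eq_iff, mul_ite, mul_zero, sum_ite_eq,
          mem_univ, if_true, mul_sum]
        exact sum_congr rfl fun i _ => mul_comm _ _

theorem sum_range_coprime_norm_sq_sum_mul_stdAddChar_le (f : (ZMod n)ˣ → ℂ) :
    ∑ x ∈ range n with x.Coprime n, ‖∑ v, f v * stdAddChar ((x : ZMod n) * (v : ZMod n))‖ ^ 2 ≤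
      n * ∑ v, ‖f v‖ ^ 2 := by
  calc _ ≤ ∑ x ∈ range n, ‖∑ v, f v * stdAddChar ((x : ZMod n) * (v : ZMod n))‖ ^ 2 :=
        sum_le_sum_of_subset_of_nonneg (filter_subset _ _) fun _ _ _ => by positivity
    _ = n * ∑ v, ‖f v‖ ^ 2 := by
        rw [sum_range_natCast fun z : ZMod n => ‖∑ v, f v * stdAddChar (z * (v : ZMod n))‖ ^ 2,
          sum_norm_sq_sum_mul_stdAddChar Units.val_injective]

end Residues

section Lifting
variable {b r : ℕ} [NeZero b] [NeZero r]

local notation "π" => castHom (dvd_mul_right b r) (ZMod b)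

theorem stdAddChar_natCast_mul_right (y : ZMod (b * r)) :
    stdAddChar ((r : ZMod (b * r)) * y) = stdAddChar (π y) := by
  obtain ⟨n, rfl⟩ := intCast_surjective y
  rw [map_intCast, ← Int.cast_natCast, ← Int.cast_mul, stdAddChar_coe, stdAddChar_coe]
  have : (r : ℂ) ≠ 0 := Nat.cast_ne_zero.2 (NeZero.ne r)
  congr 1
  push_cast
  field_simp

theorem stdAddChar_natCast_mul_left (y : ZMod (b * r)) :
    stdAddChar ((b : ZMod (b * r)) * y) = stdAddChar (castHom (dvd_mul_left r b) (ZMod r) y) := by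
  obtain ⟨n, rfl⟩ := intCast_surjective y
  rw [map_intCast, ← Int.cast_natCast, ← Int.cast_mul, stdAddChar_coe, stdAddChar_coe]
  have : (b : ℂ) ≠ 0 := Nat.cast_ne_zero.2 (NeZero.ne b)
  congr 1
  push_cast
  field_simp

theorem isUnit_castHom_iff (hrad : ∀ p : ℕ, p.Prime → p ∣ r → p ∣ b) (u : ZMod (b * r)) :
    IsUnit (π u) ↔ IsUnit u := by
  rw [← natCast_zmod_val u, map_natCast, isUnit_iff_coprime, isUnit_iff_coprime,
    Nat.coprime_mul_iff_right]
  exact ⟨fun h => ⟨h, h.coprime_of_forall_prime_dvd hrad⟩, And.left⟩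

/-- Shifting `u` by `b` fixes `π u` and multiplies the character by `e(m/r) ≠ 1`. -/
theorem sum_castHom_mul_stdAddChar_eq_zero (g : ZMod b → ℂ) {m : ℤ} (hm : ¬(r : ℤ) ∣ m) :
    ∑ u : ZMod (b * r), g (π u) * stdAddChar ((m : ZMod (b * r)) * u) = 0 := by
  have hψ : stdAddChar ((m : ZMod (b * r)) * (b : ZMod (b * r))) ≠ 1 := by
    rw [mul_comm (m : ZMod (b * r)), stdAddChar_natCast_mul_left, map_intCast,
      ← (stdAddChar (N := r)).map_zero_eq_one, Ne, injective_stdAddChar.eq_iff,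
      intCast_zmod_eq_zero_iff_dvd]
    exact hm
  refine eq_zero_of_mul_eq_self_left hψ ?_
  conv_rhs => rw [← Equiv.sum_comp (Equiv.addRight (b : ZMod (b * r)))]
  rw [mul_sum]
  refine sum_congr rfl fun u _ => ?_
  simp only [Equiv.coe_addRight, map_add, map_natCast, natCast_self, add_zero, mul_add,
    AddChar.map_add_eq_mul]
  ring

theorem sum_castHom_mul_stdAddChar_natCast_mul (g : ZMod b → ℂ) (m : ℤ) :
    ∑ u : ZMod (b * r), g (π u) * stdAddChar ((r : ZMod (b * r)) * (m : ZMod (b * r)) * u) =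
      r * ∑ v : ZMod b, g v * stdAddChar ((m : ZMod b) * v) := by
  have hcount := (π : ZMod (b * r) →+ ZMod b).card_nsmul_sum_comp_of_surjective
    (castHom_surjective (dvd_mul_right b r)) fun v => g v * stdAddChar ((m : ZMod b) * v)
  simp only [card, nsmul_eq_mul, AddMonoidHom.coe_coe, Nat.cast_mul] at hcount
  simp_rw [mul_assoc, stdAddChar_natCast_mul_right, map_mul, map_intCast]
  refine mul_left_cancel₀ (Nat.cast_ne_zero.2 (NeZero.ne b)) ?_
  rw [hcount]
  ring

end Lifting

section CRT
variable {b s : ℕ} [NeZero b] [NeZero s]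

/-- Twisted by `s` and `b` so that the additive characters split
(`stdAddChar_mul_unitsProdEquivOfCoprime`). -/
noncomputable def unitsProdEquivOfCoprime (hbs : b.Coprime s) :
    (ZMod b)ˣ × (ZMod s)ˣ ≃ (ZMod (b * s))ˣ :=
  (Equiv.prodCongr (Equiv.mulLeft (unitOfCoprime s hbs.symm))
    (Equiv.mulLeft (unitOfCoprime b hbs))).trans
    (MulEquiv.prodUnits.symm.trans (Units.mapEquiv (chineseRemainder hbs).symm.toMulEquiv)).toEquiv

theorem coe_unitsProdEquivOfCoprime (hbs : b.Coprime s) (p : (ZMod b)ˣ × (ZMod s)ˣ) :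
    (unitsProdEquivOfCoprime hbs p : ZMod (b * s)) =
      s * ((p.1 : ZMod b).val : ZMod (b * s)) + b * ((p.2 : ZMod s).val : ZMod (b * s)) := by
  change (chineseRemainder hbs).symm (s * p.1, b * p.2) = _
  rw [RingEquiv.symm_apply_eq]
  ext <;> simp [chineseRemainder, -natCast_val, natCast_zmod_val]

theorem stdAddChar_mul_unitsProdEquivOfCoprime (hbs : b.Coprime s) (k : ℤ)
    (p : (ZMod b)ˣ × (ZMod s)ˣ) :
    stdAddChar ((k : ZMod (b * s)) * (unitsProdEquivOfCoprime hbs p : ZMod (b * s))) =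
      stdAddChar ((k : ZMod b) * (p.1 : ZMod b)) * stdAddChar ((k : ZMod s) * (p.2 : ZMod s)) := by
  rw [coe_unitsProdEquivOfCoprime, mul_add, AddChar.map_add_eq_mul, mul_left_comm,
    stdAddChar_natCast_mul_right, mul_left_comm, stdAddChar_natCast_mul_left]
  simp [-natCast_val, natCast_zmod_val]

end CRT

end ZMod

section Kloosterman
variable {c : ℕ} [NeZero c]

theorem kloosterman_eq_sum_units (a m : ℤ) :
    kloosterman a m c = ∑ u : (ZMod c)ˣ,
      stdAddChar ((a : ZMod c) * (u : ZMod c) + (m : ZMod c) * ((u⁻¹ : (ZMod c)ˣ) : ZMod c)) := by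
  rw [kloosterman, dif_neg (NeZero.ne c)]
  refine sum_congr rfl fun u _ => ?_
  rw [eBase_intCast_div]
  push_cast
  simp only [natCast_val, cast_id', id]

theorem kloosterman_comm (a m : ℤ) : kloosterman a m c = kloosterman m a c := by
  simp_rw [kloosterman_eq_sum_units]
  exact Fintype.sum_equiv (Equiv.inv _) _ _ fun u => by simp [add_comm]

theorem kloosterman_eq_sum_isUnit (a m : ℤ) :
    kloosterman a m c =
      ∑ u : ZMod c, if IsUnit u then stdAddChar ((a : ZMod c) * u + (m : ZMod c) * u⁻¹) else 0 := by
  simp_rw [kloosterman_eq_sum_units, ← inv_coe_unit]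
  exact Fintype.sum_units_eq_sum_ite_isUnit fun u =>
    stdAddChar ((a : ZMod c) * u + (m : ZMod c) * u⁻¹)

theorem kloosterman_zero_left (m : ℤ) :
    kloosterman 0 m c = ∑ u : (ZMod c)ˣ, stdAddChar ((m : ZMod c) * (u : ZMod c)) := by
  rw [kloosterman_comm, kloosterman_eq_sum_units]
  simp

theorem kloosterman_zero_left_natCast_mul {r : ℕ} (hrc : r.Coprime c) (m : ℤ) :
    kloosterman 0 (r * m) c = kloosterman 0 m c := by
  simp_rw [kloosterman_zero_left]
  refine Fintype.sum_equiv (Equiv.mulLeft (unitOfCoprime r hrc)) _ _ fun u => ?_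
  simp [mul_assoc, mul_left_comm]

theorem kloosterman_natCast_mul_mul {b r : ℕ} [NeZero b] [NeZero r]
    (hrad : ∀ p : ℕ, p.Prime → p ∣ r → p ∣ b) (x m : ℤ) :
    kloosterman (r * x) m (b * r) = if (r : ℤ) ∣ m then r * kloosterman x (m / r) b else 0 := by
  set g : ZMod b → ℂ := fun v => if IsUnit v then stdAddChar ((x : ZMod b) * v⁻¹) else 0
  have hfactor : ∀ u : ZMod (b * r),
      (if IsUnit u then stdAddChar ((m : ZMod (b * r)) * u + ((r * x : ℤ) : ZMod (b * r)) * u⁻¹)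
        else 0) =
        g (castHom (dvd_mul_right b r) (ZMod b) u) * stdAddChar ((m : ZMod (b * r)) * u) := by
    intro u
    simp only [g, isUnit_castHom_iff hrad]
    split_ifs with hu
    · rw [AddChar.map_add_eq_mul, mul_comm, Int.cast_mul, Int.cast_natCast, mul_assoc,
        stdAddChar_natCast_mul_right, map_mul, map_intCast, castHom_inv _ hu]
    · rw [zero_mul]
  rw [kloosterman_comm, kloosterman_eq_sum_isUnit]
  simp_rw [hfactor]
  split_ifs with hm
  · obtain ⟨m, rfl⟩ := hm
    rw [Int.mul_ediv_cancel_left _ (Int.natCast_ne_zero.2 (NeZero.ne r)), Int.cast_mul,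
      Int.cast_natCast, sum_castHom_mul_stdAddChar_natCast_mul, kloosterman_comm,
      kloosterman_eq_sum_isUnit]
    congr 1
    refine sum_congr rfl fun v _ => ?_
    simp only [g]
    split_ifs
    · rw [AddChar.map_add_eq_mul, mul_comm]
    · rw [zero_mul]
  · exact sum_castHom_mul_stdAddChar_eq_zero g hm

end Kloosterman

theorem sum_mul_kloosterman_natCast_mul_mul {b r : ℕ} [NeZero b] [NeZero r]
    (hrad : ∀ p : ℕ, p.Prime → p ∣ r → p ∣ b) (A : Finset ℕ) (c : ℕ → ℂ) (x : ℤ) :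
    ∑ m ∈ A, c m * kloosterman (r * x) m (b * r) =
      r * ∑ v : (ZMod b)ˣ, (∑ m ∈ A with r ∣ m,
        c m * stdAddChar (((m / r : ℕ) : ZMod b) * ((v⁻¹ : (ZMod b)ˣ) : ZMod b))) *
          stdAddChar ((x : ZMod b) * (v : ZMod b)) := by
  simp_rw [kloosterman_natCast_mul_mul hrad, Int.natCast_dvd_natCast, mul_ite, mul_zero,
    ← sum_filter, ← Int.natCast_div, kloosterman_eq_sum_units, mul_sum, sum_mul]
  rw [sum_comm]
  refine sum_congr rfl fun v _ => ?_
  rw [mul_sum]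
  refine sum_congr rfl fun m _ => ?_
  rw [Int.cast_natCast, AddChar.map_add_eq_mul]
  ring

theorem sum_mul_kloosterman_zero_left_mul_kloosterman {b s r : ℕ} [NeZero b] [NeZero s]
    [NeZero r] (hrs : r.Coprime s) (hrad : ∀ p : ℕ, p.Prime → p ∣ r → p ∣ b) (A : Finset ℕ)
    (a : ℕ → ℂ) (x : ℤ) :
    ∑ m ∈ A, a m * kloosterman 0 m s * kloosterman (r * x) m (b * r) =
      r * ∑ v : (ZMod b)ˣ, (∑ m ∈ A with r ∣ m, a m * kloosterman 0 (m / r : ℕ) s *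
        stdAddChar (((m / r : ℕ) : ZMod b) * ((v⁻¹ : (ZMod b)ˣ) : ZMod b))) *
          stdAddChar ((x : ZMod b) * (v : ZMod b)) := by
  rw [sum_mul_kloosterman_natCast_mul_mul hrad]
  refine congr_arg ((r : ℂ) * ·) (sum_congr rfl fun v _ => ?_)
  refine congr_arg (· * stdAddChar ((x : ZMod b) * (v : ZMod b))) (sum_congr rfl fun m hm => ?_)
  obtain ⟨k, rfl⟩ := (mem_filter.1 hm).2
  rw [Nat.mul_div_cancel_left k (Nat.pos_of_ne_zero (NeZero.ne r)), Nat.cast_mul,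
    kloosterman_zero_left_natCast_mul hrs]

theorem sum_norm_sq_sum_kloosterman_zero_left_le {ι : Type*} {b s : ℕ} [NeZero b] [NeZero s]
    (hbs : b.Coprime s) (A : Finset ι) (a : ι → ℂ) (k : ι → ℤ) :
    ∑ v : (ZMod b)ˣ, ‖∑ i ∈ A, a i * kloosterman 0 (k i) s *
        stdAddChar ((k i : ZMod b) * ((v⁻¹ : (ZMod b)ˣ) : ZMod b))‖ ^ 2 ≤
      s * ∑ z : (ZMod (b * s))ˣ,
        ‖∑ i ∈ A, a i * stdAddChar ((k i : ZMod (b * s)) * (z : ZMod (b * s)))‖ ^ 2 := by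
  set T : (ZMod b)ˣ × (ZMod s)ˣ → ℂ := fun p => ∑ i ∈ A, a i *
    (stdAddChar ((k i : ZMod b) * (p.1 : ZMod b)) * stdAddChar ((k i : ZMod s) * (p.2 : ZMod s)))
  calc _ = ∑ v : (ZMod b)ˣ, ‖∑ w : (ZMod s)ˣ, T (v, w)‖ ^ 2 := by
        refine Fintype.sum_equiv (Equiv.inv _) _ _ fun v => ?_
        simp_rw [T, kloosterman_zero_left, mul_sum, sum_mul]
        rw [sum_comm]
        simp [mul_comm, mul_left_comm]
    _ ≤ ∑ v : (ZMod b)ˣ, s * ∑ w : (ZMod s)ˣ, ‖T (v, w)‖ ^ 2 := by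
        refine sum_le_sum fun v _ => (norm_sum_sq_le_card_mul _ _).trans ?_
        gcongr
        rw [card_univ, card_units_eq_totient]
        exact_mod_cast Nat.totient_le s
    _ = _ := by
        rw [← mul_sum, ← Fintype.sum_prod_type']
        congr 1
        refine Fintype.sum_equiv (unitsProdEquivOfCoprime hbs) _ _ fun p => ?_
        simp_rw [T, stdAddChar_mul_unitsProdEquivOfCoprime]

theorem stmt_10 (b s r M : ℕ) (hb : 1 ≤ b) (hs : 1 ≤ s) (hr : 1 ≤ r)
    (hbs : Nat.Coprime b s) (hrad : ∀ p : ℕ, p.Prime → p ∣ r → p ∣ b) (a : ℕ → ℂ) :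
    ∑ x ∈ (Finset.range b).filter (fun x => Nat.Coprime x b),
        ‖∑ m ∈ Finset.Icc 1 M, a m * kloosterman 0 m s * kloosterman (r * x) m (b * r)‖ ^ 2
      ≤ (b : ℝ) * r ^ 2 * s *
        ∑ x ∈ (Finset.range (b * s)).filter (fun x => Nat.Coprime x (b * s)),
          ‖∑ m ∈ (Finset.Icc 1 M).filter (fun m => r ∣ m),
              a m * eBase (((x * (m / r) : ℕ) : ℝ) / ((b * s : ℕ) : ℝ))‖ ^ 2 := by
  have : NeZero b := ⟨by omega⟩
  have : NeZero s := ⟨by omega⟩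
  have : NeZero r := ⟨by omega⟩
  have hrs : r.Coprime s := (hbs.symm.coprime_of_forall_prime_dvd hrad).symm
  set F := (Icc 1 M).filter (r ∣ ·)
  set H : (ZMod b)ˣ → ℂ := fun v => ∑ m ∈ F, a m * kloosterman 0 (m / r : ℕ) s *
    stdAddChar (((m / r : ℕ) : ZMod b) * ((v⁻¹ : (ZMod b)ˣ) : ZMod b))
  have hψ (x m : ℕ) : eBase (((x * (m / r) : ℕ) : ℝ) / ((b * s : ℕ) : ℝ)) =
      stdAddChar ((((m / r : ℕ) : ℤ) : ZMod (b * s)) * (x : ZMod (b * s))) := by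
    rw [eBase_natCast_div, Int.cast_natCast, Nat.cast_mul, mul_comm (x : ZMod (b * s))]
  calc _ = r ^ 2 * ∑ x ∈ range b with x.Coprime b,
        ‖∑ v : (ZMod b)ˣ, H v * stdAddChar ((x : ZMod b) * (v : ZMod b))‖ ^ 2 := by
        simp_rw [sum_mul_kloosterman_zero_left_mul_kloosterman hrs hrad, Int.cast_natCast,
          norm_mul, mul_pow, mul_sum, Complex.norm_natCast]
        rfl
    _ ≤ r ^ 2 * (b * ∑ v, ‖H v‖ ^ 2) := by
        gcongr
        exact sum_range_coprime_norm_sq_sum_mul_stdAddChar_le H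
    _ ≤ r ^ 2 * (b * (s * ∑ z : (ZMod (b * s))ˣ, ‖∑ m ∈ F,
          a m * stdAddChar ((((m / r : ℕ) : ℤ) : ZMod (b * s)) * (z : ZMod (b * s)))‖ ^ 2)) := by
        gcongr
        simpa only [Int.cast_natCast] using
          sum_norm_sq_sum_kloosterman_zero_left_le hbs F a fun m => (m / r : ℕ)
    _ = _ := by
        simp_rw [hψ, sum_range_coprime fun z : ZMod (b * s) =>
          ‖∑ m ∈ F, a m * stdAddChar ((((m / r : ℕ) : ℤ) : ZMod (b * s)) * z)‖ ^ 2]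
        ring
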